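/- Let C and D be the explicit 6×6 matrices over GF(3) given by: C has 2×2 block form [[O,O,C₀],[O,C₀,O],[C₀,O,O]] with C₀ = [[2,1],[0,1]], and D has rows [1,1,0,0,0,0], [1,0,0,0,0,0], [0,0,0,0,2,2], [0,0,0,0,0,1], [0,1,0,1,0,1], [1,0,1,0,1,0]. Then the matrix P = C·D leaves invariant exactly one 2-dimensional subspace of GF(3)^6 under the row action W ↦ {v·P : v ∈ W}, namely the span of the rows of [[1,0,1,2,2,0],[0,1,1,0,2,2]]. -/

import Mathlib

/-!
`P = C·D` satisfies `P⁵ = 1`. On an invariant plane `W`, `P` therefore restricts to an element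
of `GL(W) ≅ GL₂(𝔽₃)` whose order divides `5`; as `|GL₂(𝔽₃)| = 48` is prime to `5`, `P` fixes `W`
pointwise. The fixed space of `P` is exactly the row space of `[[1,0,1,2,2,0],[0,1,1,0,2,2]]`,
a plane, so it is the only invariant plane.
-/

open Matrix

abbrev F3 := ZMod 3
abbrev V6 := Fin 6 → F3

/-- The line (2-dim subspace) represented by a 2×6 matrix: the span of its rows. -/
def lineOf (A : Matrix (Fin 2) (Fin 6) F3) : Submodule F3 V6 :=
  Submodule.span F3 (Set.range A)

/-- The perp of a subspace `W` with respect to a 6×6 Gram matrix `M`: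
`{x | xᵀ M w = 0 for all w ∈ W}`. -/
def perp (M : Matrix (Fin 6) (Fin 6) F3) (W : Submodule F3 V6) : Submodule F3 V6 where
  carrier := {x | ∀ w ∈ W, x ⬝ᵥ M.mulVec w = 0}
  add_mem' := by
    intro a b ha hb w hw
    simp only [Set.mem_setOf_eq] at *
    rw [add_dotProduct, ha w hw, hb w hw, add_zero]
  zero_mem' := by
    intro w hw
    exact zero_dotProduct _
  smul_mem' := by
    intro c x hx w hw
    simp only [Set.mem_setOf_eq] at *
    rw [smul_dotProduct, hx w hw, smul_zero]

/-- A 2×6 matrix built from three 2×2 blocks. -/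
def blk3 (A B C : Matrix (Fin 2) (Fin 2) F3) : Matrix (Fin 2) (Fin 6) F3 :=
  Matrix.of fun i j => ![A, B, C] ⟨(j : ℕ) / 2, by omega⟩ i ⟨(j : ℕ) % 2, by omega⟩

/-- A 6×6 matrix built from nine 2×2 blocks. -/
def blk33 (M : Matrix (Fin 3) (Fin 3) (Matrix (Fin 2) (Fin 2) F3)) :
    Matrix (Fin 6) (Fin 6) F3 :=
  Matrix.of fun i j =>
    M ⟨(i : ℕ) / 2, by omega⟩ ⟨(j : ℕ) / 2, by omega⟩ ⟨(i : ℕ) % 2, by omega⟩ ⟨(j : ℕ) % 2, by omega⟩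

/-- The 2×2 block of a 6×6 matrix in block-position `(i, j)`. -/
def blkAt (M : Matrix (Fin 6) (Fin 6) F3) (i j : Fin 3) : Matrix (Fin 2) (Fin 2) F3 :=
  Matrix.of fun a b => M ⟨2 * (i : ℕ) + (a : ℕ), by omega⟩ ⟨2 * (j : ℕ) + (b : ℕ), by omega⟩

/-- Two (not necessarily distinct) lines are opposite w.r.t. `M` if `ℓ ∩ m^⊥ = 0`. -/
def Opp (M : Matrix (Fin 6) (Fin 6) F3) (ℓ m : Submodule F3 V6) : Prop :=
  ℓ ⊓ perp M m = ⊥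

/-- The matrix `C`, with block form `[[O,O,C₀],[O,C₀,O],[C₀,O,O]]`, `C₀ = [[2,1],[0,1]]`. -/
def Cmat : Matrix (Fin 6) (Fin 6) F3 :=
  blk33 !![0, 0, !![2, 1; 0, 1]; 0, !![2, 1; 0, 1], 0; !![2, 1; 0, 1], 0, 0]

/-- The matrix `D`. -/
def Dmat : Matrix (Fin 6) (Fin 6) F3 :=
  !![1, 1, 0, 0, 0, 0;
     1, 0, 0, 0, 0, 0;
     0, 0, 0, 0, 2, 2;
     0, 0, 0, 0, 0, 1;
     0, 1, 0, 1, 0, 1;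
     1, 0, 1, 0, 1, 0]

theorem Matrix.vecMulLinear_pow {R n : Type*} [CommSemiring R] [Fintype n] [DecidableEq n]
    (M : Matrix n n R) (k : ℕ) : (M ^ k).vecMulLinear = M.vecMulLinear ^ k := by
  induction k with
  | zero => ext; simp
  | succ k ih =>
    refine LinearMap.ext fun v => ?_
    rw [pow_succ', pow_succ, Module.End.mul_apply, ← ih]
    simp only [Matrix.vecMulLinear_apply, Matrix.vecMul_vecMul]

section

variable {K V : Type*} [Field K] [AddCommGroup V] [Module K V]

theorem LinearMap.GeneralLinearGroup.natCard_eq [FiniteDimensional K V] :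
    Nat.card (LinearMap.GeneralLinearGroup K V) = Nat.card (GL (Fin (Module.finrank K V)) K) :=
  Nat.card_congr (Matrix.GeneralLinearGroup.toLin' (Module.finBasis K V)).toEquiv.symm

theorem Submodule.le_ker_sub_one_of_pow_eq_one [Fintype K] {f : Module.End K V} {n : ℕ}
    (hn : n ≠ 0) (hf : f ^ n = 1) {W : Submodule K V} [FiniteDimensional K W] (hW : ∀ x ∈ W, f x ∈ W)
    (hcop : (Nat.card (GL (Fin (Module.finrank K W)) K)).Coprime n) :
    W ≤ LinearMap.ker (f - 1) := by
  have hg : f.restrict hW ^ n = 1 := by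
    rw [Module.End.pow_restrict]
    ext x
    simp [hf]
  set u := (IsUnit.of_pow_eq_one hg hn).unit
  have hu : u = 1 := by
    rw [← LinearMap.GeneralLinearGroup.natCard_eq] at hcop
    refine (powCoprime hcop).injective ?_
    simp only [powCoprime, Equiv.coe_fn_mk, one_pow]
    exact Units.ext (by simpa [u] using hg)
  intro x hx
  have := congrArg (fun g : LinearMap.GeneralLinearGroup K W => (g : Module.End K W) ⟨x, hx⟩) hu
  simpa [u, sub_eq_zero] using congrArg Subtype.val this

theorem Submodule.map_eq_self_of_le_ker_sub_one {f : Module.End K V} {W : Submodule K V}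
    (hW : W ≤ LinearMap.ker (f - 1)) : W.map f = W := by
  have hfix : ∀ x ∈ W, f x = x := fun x hx => by simpa [sub_eq_zero] using hW hx
  ext x
  constructor
  · rintro ⟨y, hy, rfl⟩
    rwa [hfix y hy]
  · exact fun hx => ⟨x, hx, hfix x hx⟩

end

theorem Cmat_mul_Dmat : Cmat * Dmat =
    !![1, 2, 1, 2, 1, 2;
       1, 0, 1, 0, 1, 0;
       0, 0, 0, 0, 1, 2;
       0, 0, 0, 0, 0, 1;
       0, 2, 0, 0, 0, 0;
       1, 0, 0, 0, 0, 0] := by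
  decide

theorem Cmat_mul_Dmat_pow_five : (Cmat * Dmat) ^ 5 = 1 := by
  decide

theorem natCard_GL_two_zmod_three : Nat.card (GL (Fin 2) F3) = 48 := by
  rw [Matrix.card_GL_field]
  simp [Fin.prod_univ_two]

theorem finrank_lineOf_fixedPlane :
    Module.finrank F3 (lineOf !![1, 0, 1, 2, 2, 0; 0, 1, 1, 0, 2, 2]) = 2 := by
  have hli : LinearIndependent F3 fun i => (!![1, 0, 1, 2, 2, 0; 0, 1, 1, 0, 2, 2] i : V6) := by
    rw [Fintype.linearIndependent_iff]
    decide
  have h := finrank_span_eq_card hli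
  rw [Fintype.card_fin] at h
  exact h

theorem ker_vecMulLinear_Cmat_mul_Dmat_sub_one :
    LinearMap.ker ((Cmat * Dmat).vecMulLinear - 1) =
      lineOf !![1, 0, 1, 2, 2, 0; 0, 1, 1, 0, 2, 2] := by
  apply le_antisymm
  · intro v hker
    have h : v ᵥ* (Cmat * Dmat) = v := by simpa [sub_eq_zero] using hker
    rw [Cmat_mul_Dmat] at h
    have h0 := congrFun h 0
    have h1 := congrFun h 1
    have h2 := congrFun h 2
    have h3 := congrFun h 3
    simp only [vecMul, dotProduct, Fin.sum_univ_six, of_apply, cons_val', cons_val, cons_val_zero,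
      cons_val_one, cons_val_fin_one, mul_zero, mul_one, add_zero] at h0 h1 h2 h3
    have hv : v = v 0 • (!![1, 0, 1, 2, 2, 0; 0, 1, 1, 0, 2, 2] 0 : V6) +
        v 1 • (!![1, 0, 1, 2, 2, 0; 0, 1, 1, 0, 2, 2] 1 : V6) := by
      funext j
      fin_cases j <;> simp <;> grind
    rw [hv]
    exact add_mem (Submodule.smul_mem _ _ (Submodule.subset_span ⟨0, rfl⟩))
      (Submodule.smul_mem _ _ (Submodule.subset_span ⟨1, rfl⟩))
  · refine Submodule.span_le.mpr ?_
    rintro _ ⟨i, rfl⟩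
    simp only [SetLike.mem_coe, LinearMap.mem_ker]
    fin_cases i <;> decide

/-- The matrix `P = C·D` leaves invariant exactly one 2-dimensional
subspace of `GF(3)^6` under the row action, namely the row space of
`[[1,0,1,2,2,0],[0,1,1,0,2,2]]`. -/
theorem stmt12 :
    ∀ W : Submodule F3 V6,
      (Module.finrank F3 W = 2 ∧ W.map (Cmat * Dmat).vecMulLinear = W) ↔
        W = lineOf !![1, 0, 1, 2, 2, 0; 0, 1, 1, 0, 2, 2] := by
  intro W
  constructor
  · rintro ⟨hrank, hmap⟩
    have hpow : (Cmat * Dmat).vecMulLinear ^ 5 = 1 := by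
      rw [← Matrix.vecMulLinear_pow, Cmat_mul_Dmat_pow_five]
      exact LinearMap.ext vecMul_one
    have hle : W ≤ lineOf !![1, 0, 1, 2, 2, 0; 0, 1, 1, 0, 2, 2] := by
      rw [← ker_vecMulLinear_Cmat_mul_Dmat_sub_one]
      refine W.le_ker_sub_one_of_pow_eq_one (by norm_num) hpow
        (fun x hx => hmap ▸ Submodule.mem_map_of_mem hx) ?_
      rw [hrank, natCard_GL_two_zmod_three]
      norm_num
    exact Submodule.eq_of_le_of_finrank_le hle (by rw [hrank, finrank_lineOf_fixedPlane])
  · rintro rfl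
    exact ⟨finrank_lineOf_fixedPlane, Submodule.map_eq_self_of_le_ker_sub_one
      ker_vecMulLinear_Cmat_mul_Dmat_sub_one.ge⟩
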